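/- With the composed SetCover instance Γ' as in the context, let ε ∈ (0,1) and h > 0 be real numbers, and assume the threshold graph T satisfies the soundness property: for every X ⊆ A and every b : Fin m → B₀, if the number of indices i ∈ Fin m with |{a ∈ X : (a, (i, b(i))) ∈ E_T}| ≥ k + 1 is at least ε·m, then |X| > h. Suppose further that no subset of S of size at most k covers U in Γ. Then for every X ⊆ A and Y ⊆ B such that X ∪ Y covers every element of U' in Γ', the total weight satisfies (m/k)·|X| + |Y| > min(m·h/k, (1−ε)·m·c). -/

import Mathlib

/-- An element of the universe `U'` of the composed SetCover instance `Γ'`: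
an index `i ∈ Fin m` together with `u⃗ : Fin c → U` and `b⃗ : Fin c → B₀`
(the vector `b⃗` taking values in the part `B_i = {i} × B₀`). -/
abbrev ComposedElt (U B₀ : Type*) (m c : ℕ) := Fin m × (Fin c → U) × (Fin c → B₀)

/-- A left vertex `a ∈ A = Fin k × S` covers `(i, u⃗, b⃗) ∈ U'` iff there is `j ∈ Fin c`
with `(a, (i, b⃗ j)) ∈ E_T` and `(s(a), u⃗ j) ∈ E`. -/
def coversA {S U B₀ : Type*} {k m c : ℕ}
    (E : S → U → Prop) (E_T : Fin k × S → Fin m × B₀ → Prop)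
    (a : Fin k × S) (elt : ComposedElt U B₀ m c) : Prop :=
  ∃ j : Fin c, E_T a (elt.1, elt.2.2 j) ∧ E a.2 (elt.2.1 j)

/-- A right vertex `b ∈ B = Fin m × B₀` covers `(i, u⃗, b⃗) ∈ U'` iff `b ∈ B_i`
and `b` differs from `(i, b⃗ j)` for every `j ∈ Fin c`. -/
def coversB {U B₀ : Type*} {m c : ℕ}
    (b : Fin m × B₀) (elt : ComposedElt U B₀ m c) : Prop :=
  b.1 = elt.1 ∧ ∀ j : Fin c, b.2 ≠ elt.2.2 j

/-!
If `|X| > h`, the vertices of `A` alone weigh more than `m·h/k`. Otherwise soundness of `T`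
leaves more than `(1 - ε)·m` indices `i` at which every vertex of `B_i` has at most `k`
neighbours in `X`. At such an `i`, a set cover of size `≤ k` being impossible in `Γ`, the
elements of index `i` can only be covered by `Y`, which therefore needs `c` vertices in `B_i`;
hence `|Y| > (1 - ε)·m·c`.
-/

theorem Finset.exists_subset_range_of_card_le {α : Type*} [Nonempty α] (s : Finset α) {c : ℕ}
    (hs : s.card ≤ c) : ∃ v : Fin c → α, ↑s ⊆ Set.range v := by
  obtain ⟨f⟩ : Nonempty (s ↪ Fin c) :=
    Function.Embedding.nonempty_of_card_le (by simpa using hs)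
  refine ⟨Function.extend f Subtype.val (fun _ => Classical.arbitrary α), fun x hx => ?_⟩
  exact ⟨f ⟨x, hx⟩, f.injective.extend_apply _ _ _⟩

theorem exists_uncovered_of_card_le {ι S U : Type*} {E : S → U → Prop} {k : ℕ}
    (hard : ¬ ∃ C : Finset S, C.card ≤ k ∧ ∀ u : U, ∃ s ∈ C, E s u)
    (T : Finset ι) (f : ι → S) (hT : T.card ≤ k) : ∃ u, ∀ a ∈ T, ¬ E (f a) u := by
  classical
  push Not at hard
  obtain ⟨u, hu⟩ := hard (T.image f) (Finset.card_image_le.trans hT)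
  exact ⟨u, fun a ha => hu (f a) (Finset.mem_image_of_mem f ha)⟩

theorem Finset.card_mul_le_card_of_le_card_fiber {ι β : Type*} [DecidableEq ι]
    {G : Finset ι} {Y : Finset (ι × β)} {c : ℕ}
    (hfiber : ∀ i ∈ G, c ≤ (Y.filter (·.1 = i)).card) : G.card * c ≤ Y.card := by
  simpa using Finset.card_mul_le_card_mul (fun i (p : ι × β) => p.1 = i) hfiber
    fun p _ => Finset.card_le_one.2 fun i hi j hj =>
      (Finset.mem_filter.1 hi).2.symm.trans (Finset.mem_filter.1 hj).2

section Composition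

variable {S U B₀ : Type*} {k m c : ℕ} {E : S → U → Prop} {E_T : Fin k × S → Fin m × B₀ → Prop}

/-- If fewer than `c` vertices of `Y` lie in `B_i`, list them all in `b⃗`, so that none of them
covers `(i, u⃗, b⃗)`; each `b⃗ j` has at most `k` neighbours in `X`, whose sets miss some `u⃗ j`
by hardness of `Γ`, so `X` does not cover `(i, u⃗, b⃗)` either. -/
theorem le_card_fiber_of_covers [Nonempty B₀]
    (hard : ¬ ∃ C : Finset S, C.card ≤ k ∧ ∀ u : U, ∃ s ∈ C, E s u)
    {X : Finset (Fin k × S)} {Y : Finset (Fin m × B₀)} {i : Fin m}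
    (hlow : ∀ b₀, {a : Fin k × S | a ∈ X ∧ E_T a (i, b₀)}.ncard ≤ k)
    (hcov : ∀ elt : ComposedElt U B₀ m c, elt.1 = i →
      (∃ a ∈ X, coversA E E_T a elt) ∨ (∃ b ∈ Y, coversB b elt)) :
    c ≤ (Y.filter (·.1 = i)).card := by
  classical
  by_contra! hlt
  obtain ⟨bvec, hbvec⟩ := ((Y.filter (·.1 = i)).image Prod.snd).exists_subset_range_of_card_le
    (Finset.card_image_le.trans hlt.le)
  have huncov : ∀ j : Fin c, ∃ u : U, ∀ a ∈ X.filter (E_T · (i, bvec j)), ¬ E a.2 u := by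
    intro j
    refine exists_uncovered_of_card_le hard _ Prod.snd ?_
    simpa [← Set.ncard_coe_finset] using hlow (bvec j)
  choose uvec huvec using huncov
  obtain ⟨a, haX, j, hET, hE⟩ | ⟨p, hpY, hpi, hpb⟩ := hcov (i, uvec, bvec) rfl
  · exact huvec j a (Finset.mem_filter.2 ⟨haX, hET⟩) hE
  · obtain ⟨j, hj⟩ := hbvec (Finset.mem_image_of_mem Prod.snd (Finset.mem_filter.2 ⟨hpY, hpi⟩))
    exact hpb j hj.symm

/-- Soundness of `T`, used with `b i` a vertex of `B_i` of degree `> k` whenever there is one. -/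
theorem exists_many_lowDegree_blocks [Nonempty B₀] {ε h : ℝ} {X : Finset (Fin k × S)}
    (hsound : ∀ b : Fin m → B₀,
      ε * m ≤
        (({i : Fin m | k + 1 ≤ {a : Fin k × S | a ∈ X ∧ E_T a (i, b i)}.ncard}).ncard : ℝ) →
      h < (X.card : ℝ))
    (hX : (X.card : ℝ) ≤ h) :
    ∃ G : Finset (Fin m), (1 - ε) * m < G.card ∧
      ∀ i ∈ G, ∀ b₀, {a : Fin k × S | a ∈ X ∧ E_T a (i, b₀)}.ncard ≤ k := by
  classical
  set deg : Fin m → B₀ → ℕ := fun i b₀ => {a : Fin k × S | a ∈ X ∧ E_T a (i, b₀)}.ncard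
  have hchoice : ∃ b : Fin m → B₀, ∀ i b₀, k + 1 ≤ deg i b₀ → k + 1 ≤ deg i (b i) := by
    refine ⟨fun i => if hi : ∃ b₀, k + 1 ≤ deg i b₀ then hi.choose
      else Classical.arbitrary B₀, fun i b₀ hb₀ => ?_⟩
    have hi : ∃ b₀, k + 1 ≤ deg i b₀ := ⟨b₀, hb₀⟩
    simpa only [dif_pos hi] using hi.choose_spec
  obtain ⟨b, hb⟩ := hchoice
  have hhigh : ((Finset.univ.filter fun i => ¬ ∀ b₀, deg i b₀ ≤ k).card : ℝ) < ε * m := by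
    refine lt_of_le_of_lt ?_ (lt_of_not_ge fun hge => (hsound b hge).not_ge hX)
    rw [← Set.ncard_coe_finset]
    refine Nat.cast_le.2 (Set.ncard_le_ncard (fun i hi => ?_) (Set.toFinite _))
    simp only [Finset.coe_filter, Finset.mem_univ, true_and, not_forall, not_le,
      Set.mem_ofPred_eq] at hi ⊢
    obtain ⟨b₀, hb₀⟩ := hi
    exact hb i b₀ hb₀
  refine ⟨Finset.univ.filter fun i => ∀ b₀, deg i b₀ ≤ k, ?_,
    fun i hi => (Finset.mem_filter.1 hi).2⟩
  have hsum : ((Finset.univ.filter fun i => ∀ b₀, deg i b₀ ≤ k).card : ℝ) +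
      (Finset.univ.filter fun i => ¬ ∀ b₀, deg i b₀ ≤ k).card = m := by
    exact_mod_cast (Finset.card_filter_add_card_filter_not _).trans (Finset.card_fin m)
  linarith

end Composition

theorem composed_soundness_weighted_general {S U B₀ : Type*}
    [Nonempty B₀] {k m c : ℕ} (hk : 0 < k) (hm : 0 < m) (hc : 0 < c)
    (E : S → U → Prop) (E_T : Fin k × S → Fin m × B₀ → Prop)
    {ε h : ℝ}
    (hsound : ∀ (X : Finset (Fin k × S)) (b : Fin m → B₀),
      ε * m ≤
        (({i : Fin m |
          k + 1 ≤ {a : Fin k × S | a ∈ X ∧ E_T a (i, b i)}.ncard}).ncard : ℝ) →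
      h < (X.card : ℝ))
    (hard : ¬ ∃ C : Finset S, C.card ≤ k ∧ ∀ u : U, ∃ s ∈ C, E s u) :
    ∀ (X : Finset (Fin k × S)) (Y : Finset (Fin m × B₀)),
      (∀ elt : ComposedElt U B₀ m c,
        (∃ a ∈ X, coversA E E_T a elt) ∨ (∃ b ∈ Y, coversB b elt)) →
      min ((m : ℝ) * h / k) ((1 - ε) * m * c) <
        (m : ℝ) / k * (X.card : ℝ) + (Y.card : ℝ) := by
  intro X Y hcov
  have hweight : 0 < (m : ℝ) / k := by positivity
  by_cases hX : h < X.card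
  · calc min ((m : ℝ) * h / k) ((1 - ε) * m * c) ≤ m / k * h := by
          rw [mul_div_right_comm]; exact min_le_left _ _
      _ < m / k * X.card := mul_lt_mul_of_pos_left hX hweight
      _ ≤ m / k * X.card + Y.card := le_add_of_nonneg_right (Nat.cast_nonneg _)
  · obtain ⟨G, hG, hlow⟩ := exists_many_lowDegree_blocks (hsound X) (not_lt.1 hX)
    have hY : G.card * c ≤ Y.card := Finset.card_mul_le_card_of_le_card_fiber fun i hi =>
      le_card_fiber_of_covers hard (hlow i hi) fun elt _ => hcov elt
    calc min ((m : ℝ) * h / k) ((1 - ε) * m * c) ≤ (1 - ε) * m * c := min_le_right _ _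
      _ < G.card * c := mul_lt_mul_of_pos_right hG (by exact_mod_cast hc)
      _ ≤ Y.card := by exact_mod_cast hY
      _ ≤ m / k * X.card + Y.card := le_add_of_nonneg_left (by positivity)

/-- **soundness of the composition, weighted form.** Assume the threshold
graph satisfies the strong soundness property with parameters `ε ∈ (0,1)` and `h > 0`,
and that no subset of `S` of size at most `k` covers `U` in `Γ`. Then every solution
`X ∪ Y` (with `X ⊆ A` of weight `m/k` each, `Y ⊆ B` of weight `1` each) of `Γ'` has
total weight greater than `min(m·h/k, (1-ε)·m·c)`. -/
theorem composed_soundness_weighted {S U B₀ : Type*} [Fintype S] [Fintype U] [Fintype B₀]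
    [Nonempty B₀] {k m c : ℕ} (hk : 0 < k) (hm : 0 < m) (hc : 0 < c)
    (E : S → U → Prop) (E_T : Fin k × S → Fin m × B₀ → Prop)
    {ε h : ℝ} (hε : ε ∈ Set.Ioo (0 : ℝ) 1) (hh : 0 < h)
    (hsound : ∀ (X : Finset (Fin k × S)) (b : Fin m → B₀),
      ε * m ≤
        (({i : Fin m |
          k + 1 ≤ {a : Fin k × S | a ∈ X ∧ E_T a (i, b i)}.ncard}).ncard : ℝ) →
      h < (X.card : ℝ))
    (hard : ¬ ∃ C : Finset S, C.card ≤ k ∧ ∀ u : U, ∃ s ∈ C, E s u) :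
    ∀ (X : Finset (Fin k × S)) (Y : Finset (Fin m × B₀)),
      (∀ elt : ComposedElt U B₀ m c,
        (∃ a ∈ X, coversA E E_T a elt) ∨ (∃ b ∈ Y, coversB b elt)) →
      min ((m : ℝ) * h / k) ((1 - ε) * m * c) <
        (m : ℝ) / k * (X.card : ℝ) + (Y.card : ℝ) :=
  composed_soundness_weighted_general hk hm hc E E_T hsound hard
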